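/- Let 0 < q < 1 and let μ, ν be real numbers with μ > −1 and ν > −1. Then for all x > 0, the q-derivative at x of the function G(x) := ([μ]_q − [ν]_q)·J_ν^{(3)}(x/q; q²)·J_μ^{(3)}(x/q; q²) + (x/(1−q))·( J_{ν+1}^{(3)}(x; q²)·J_μ^{(3)}(x/q; q²) − J_ν^{(3)}(x/q; q²)·J_{μ+1}^{(3)}(x; q²) ) equals x·( q^{−ν}·[ν−μ]_q/(1−q) + (q^{−μ}·[μ]_q² − q^{−ν}·[ν]_q²)/x² )·J_ν^{(3)}(x; q²)·J_μ^{(3)}(x; q²). -/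

import Mathlib

/-- The Jackson `q`-derivative `(D_q f)(x) = (f(x) - f(qx)) / ((1-q)x)`. -/
noncomputable def qDeriv (q : ℝ) (f : ℝ → ℝ) (x : ℝ) : ℝ :=
  (f x - f (q * x)) / ((1 - q) * x)

/-- The finite q-shifted factorial `(z; q)_n`. -/
noncomputable def qPoch (z q : ℝ) (n : ℕ) : ℝ :=
  ∏ k ∈ Finset.range n, (1 - z * q ^ k)

/-- The infinite q-shifted factorial `(z; q)_∞`. -/
noncomputable def qPochInf (z q : ℝ) : ℝ :=
  ∏' k : ℕ, (1 - z * q ^ k)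

/-- The q-bracket `[ν]_q = (1 - q^ν)/(1 - q)` for a real `ν` (rpow). -/
noncomputable def qBracket (q ν : ℝ) : ℝ := (1 - q ^ ν) / (1 - q)

/-- The third Jackson q-Bessel function `J_ν^{(3)}(x; q²)`. -/
noncomputable def J3 (q ν x : ℝ) : ℝ :=
  (qPochInf (q ^ (2 * ν + 2)) (q ^ 2) / qPochInf (q ^ 2) (q ^ 2)) *
    ∑' n : ℕ, ((-1 : ℝ) ^ n * q ^ (n * (n + 1)) * x ^ (2 * (n : ℝ) + ν)) /
      (qPoch (q ^ 2) (q ^ 2) n *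
        ∏ j ∈ Finset.range n, (1 - q ^ (2 * ν + 2 + 2 * (j : ℝ))))

/-!
Write `J_ν^{(3)}(x; q²) = ∑ₙ c_ν(n) x^{2n+ν}`. Since `(a; q²)_{n+1} = (1 - a)(aq²; q²)_n`, the
coefficients satisfy `c_ν(n) = (1 - q^{2ν+2+2n}) c_{ν+1}(n)` and
`c_ν(n+1) (1 - q^{2n+2}) = -q^{2n+2} c_{ν+1}(n)`. Comparing coefficients gives the contiguous
relations `x J_ν(x) = J_{ν+1}(x) - q^{ν+1} J_{ν+1}(qx)` and `q^ν J_ν(x/q) = J_ν(x) - x J_{ν+1}(x)`,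
which express `J_ν(x/q)` and `J_{ν+1}(qx)` through `J_ν(x)` and `J_{ν+1}(x)`. Substituting them,
for `ν` and for `μ`, into the difference quotient `(G(x) - G(qx)) / ((1-q)x)` leaves a rational
identity in `J_ν(x), J_{ν+1}(x), J_μ(x), J_{μ+1}(x), q^ν, q^μ`.
-/

open Filter Topology Finset

theorem summable_of_norm_succ_le_of_tendsto_zero {E : Type*} [SeminormedAddCommGroup E]
    [CompleteSpace E] {f : ℕ → E} {r : ℕ → ℝ} (hr : Tendsto r atTop (𝓝 0))
    (hf : ∀ n, ‖f (n + 1)‖ ≤ r n * ‖f n‖) : Summable f :=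
  summable_of_ratio_norm_eventually_le one_half_lt_one <| by
    filter_upwards [hr.eventually_le_const one_half_pos] with n hn
    exact (hf n).trans (mul_le_mul_of_nonneg_right hn (norm_nonneg _))

theorem mul_pow_lt_one {z q : ℝ} (hz : z < 1) (hq : 0 ≤ q) (hq1 : q ≤ 1) (k : ℕ) :
    z * q ^ k < 1 := by
  rcases le_total z 0 with hz0 | hz0
  · exact (mul_nonpos_of_nonpos_of_nonneg hz0 (pow_nonneg hq k)).trans_lt one_pos
  · exact (mul_le_of_le_one_right hz0 (pow_le_one₀ hq hq1)).trans_lt hz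

theorem qPoch_pos {z q : ℝ} (hz : z < 1) (hq : 0 ≤ q) (hq1 : q ≤ 1) (n : ℕ) :
    0 < qPoch z q n :=
  prod_pos fun k _ => sub_pos.2 (mul_pow_lt_one hz hq hq1 k)

theorem qPoch_succ (z q : ℝ) (n : ℕ) : qPoch z q (n + 1) = qPoch z q n * (1 - z * q ^ n) :=
  prod_range_succ _ _

theorem qPoch_succ' (z q : ℝ) (n : ℕ) : qPoch z q (n + 1) = (1 - z) * qPoch (z * q) q n := by
  rw [qPoch, prod_range_succ', mul_comm]
  simp only [qPoch, pow_succ', pow_zero, mul_one, mul_assoc]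

theorem multipliable_one_sub_mul_pow {q : ℝ} (z : ℝ) (hq : |q| < 1) :
    Multipliable fun k : ℕ => 1 - z * q ^ k := by
  simpa only [sub_eq_add_neg] using Real.multipliable_one_add_of_summable
    ((summable_geometric_of_abs_lt_one hq).mul_left z).neg

theorem qPochInf_eq_one_sub_mul {q : ℝ} (z : ℝ) (hq : |q| < 1) :
    qPochInf z q = (1 - z) * qPochInf (z * q) q := by
  have hshift : (fun k : ℕ => 1 - z * q ^ (k + 1)) = fun k => 1 - z * q * q ^ k := by
    simp only [pow_succ', mul_assoc]
  rw [qPochInf, tprod_eq_zero_mul' (hshift ▸ multipliable_one_sub_mul_pow (z * q) hq), hshift,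
    pow_zero, mul_one, qPochInf]

section J3Series

variable {q ν : ℝ}

noncomputable def J3coeff (q ν : ℝ) (n : ℕ) : ℝ :=
  qPochInf (q ^ (2 * ν + 2)) (q ^ 2) / qPochInf (q ^ 2) (q ^ 2) *
    ((-1) ^ n * q ^ (n * (n + 1)) / (qPoch (q ^ 2) (q ^ 2) n * qPoch (q ^ (2 * ν + 2)) (q ^ 2) n))

theorem prod_one_sub_rpow_eq_qPoch (hq : 0 < q) (ν : ℝ) (n : ℕ) :
    ∏ j ∈ range n, (1 - q ^ (2 * ν + 2 + 2 * (j : ℝ))) = qPoch (q ^ (2 * ν + 2)) (q ^ 2) n := by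
  refine prod_congr rfl fun j _ => ?_
  rw [Real.rpow_add hq, Real.rpow_mul hq.le, Real.rpow_two, Real.rpow_natCast]

theorem J3_eq_tsum (hq : 0 < q) (ν x : ℝ) :
    J3 q ν x = ∑' n : ℕ, J3coeff q ν n * x ^ (2 * (n : ℝ) + ν) := by
  rw [J3, ← tsum_mul_left]
  refine tsum_congr fun n => ?_
  rw [J3coeff, prod_one_sub_rpow_eq_qPoch hq]
  ring

theorem rpow_two_mul_add_two_lt_one (hq : 0 < q) (hq1 : q < 1) (hν : -1 < ν) :
    q ^ (2 * ν + 2) < 1 :=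
  Real.rpow_lt_one hq.le hq1 (by linarith)

theorem rpow_two_mul_add_one_add_two (hq : 0 < q) (ν : ℝ) :
    q ^ (2 * (ν + 1) + 2) = q ^ (2 * ν + 2) * q ^ 2 := by
  rw [← Real.rpow_natCast, ← Real.rpow_add hq]
  ring_nf

theorem J3coeff_eq_mul_J3coeff_add_one (hq : 0 < q) (hq1 : q < 1) (hν : -1 < ν) (n : ℕ) :
    J3coeff q ν n = (1 - q ^ (2 * ν + 2) * (q ^ 2) ^ n) * J3coeff q (ν + 1) n := by
  have hQ0 : 0 ≤ q ^ 2 := sq_nonneg q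
  have hQ1 : q ^ 2 < 1 := pow_lt_one₀ hq.le hq1 two_ne_zero
  have ha1 := rpow_two_mul_add_two_lt_one hq hq1 hν
  have hP := (qPoch_pos hQ1 hQ0 hQ1.le n).ne'
  have hPa := (qPoch_pos ha1 hQ0 hQ1.le n).ne'
  have hPaQ := (qPoch_pos (mul_lt_one_of_nonneg_of_lt_one_left (Real.rpow_nonneg hq.le _) ha1 hQ1.le)
    hQ0 hQ1.le n).ne'
  have hstep := (qPoch_succ (q ^ (2 * ν + 2)) (q ^ 2) n).symm.trans (qPoch_succ' _ _ n)
  rw [J3coeff, J3coeff, rpow_two_mul_add_one_add_two hq,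
    qPochInf_eq_one_sub_mul _ (by rwa [abs_of_nonneg hQ0])]
  generalize q ^ (2 * ν + 2) = a at *
  field_simp
  linear_combination -(qPochInf (a * q ^ 2) (q ^ 2) / qPochInf (q ^ 2) (q ^ 2)) * hstep

theorem J3coeff_succ (hq : 0 < q) (hq1 : q < 1) (hν : -1 < ν) (n : ℕ) :
    J3coeff q ν (n + 1) * (1 - (q ^ 2) ^ (n + 1)) = -((q ^ 2) ^ (n + 1) * J3coeff q (ν + 1) n) := by
  have hQ0 : 0 ≤ q ^ 2 := sq_nonneg q
  have hQ1 : q ^ 2 < 1 := pow_lt_one₀ hq.le hq1 two_ne_zero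
  have hQn1 : 1 - q ^ 2 * (q ^ 2) ^ n ≠ 0 := (sub_pos.2 (mul_pow_lt_one hQ1 hQ0 hQ1.le n)).ne'
  have ha1 := rpow_two_mul_add_two_lt_one hq hq1 hν
  have hP := (qPoch_pos hQ1 hQ0 hQ1.le n).ne'
  have hPaQ := (qPoch_pos (mul_lt_one_of_nonneg_of_lt_one_left (Real.rpow_nonneg hq.le _) ha1 hQ1.le)
    hQ0 hQ1.le n).ne'
  rw [J3coeff, J3coeff, rpow_two_mul_add_one_add_two hq, qPoch_succ, qPoch_succ',
    qPochInf_eq_one_sub_mul _ (by rwa [abs_of_nonneg hQ0])]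
  generalize q ^ (2 * ν + 2) = a at *
  have ha : 1 - a ≠ 0 := (sub_pos.2 ha1).ne'
  field_simp
  ring

theorem J3coeff_succ_eq_mul (hq : 0 < q) (hq1 : q < 1) (hν : -1 < ν) (n : ℕ) :
    J3coeff q ν (n + 1) = -((q ^ 2) ^ (n + 1) /
      ((1 - (q ^ 2) ^ (n + 1)) * (1 - q ^ (2 * ν + 2) * (q ^ 2) ^ n))) * J3coeff q ν n := by
  have hQ1 : q ^ 2 < 1 := pow_lt_one₀ hq.le hq1 two_ne_zero
  have hQ : 1 - (q ^ 2) ^ (n + 1) ≠ 0 :=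
    (sub_pos.2 (pow_lt_one₀ (sq_nonneg q) hQ1 n.succ_ne_zero)).ne'
  have ha : 1 - q ^ (2 * ν + 2) * (q ^ 2) ^ n ≠ 0 :=
    (sub_pos.2 (mul_pow_lt_one (rpow_two_mul_add_two_lt_one hq hq1 hν) (sq_nonneg q) hQ1.le n)).ne'
  have hsucc := J3coeff_succ hq hq1 hν n
  rw [J3coeff_eq_mul_J3coeff_add_one hq hq1 hν n]
  generalize q ^ (2 * ν + 2) = a at *
  field_simp
  linear_combination hsucc

theorem rpow_two_mul_natCast_succ_add {x : ℝ} (hx : 0 < x) (n : ℕ) (ν : ℝ) :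
    x ^ (2 * ((n + 1 : ℕ) : ℝ) + ν) = x ^ 2 * x ^ (2 * (n : ℝ) + ν) := by
  rw [← Real.rpow_natCast x 2, ← Real.rpow_add hx]
  push_cast
  ring_nf

theorem summable_J3coeff_mul_rpow (hq : 0 < q) (hq1 : q < 1) (hν : -1 < ν) {x : ℝ} (hx : 0 < x) :
    Summable fun n : ℕ => J3coeff q ν n * x ^ (2 * (n : ℝ) + ν) := by
  have hQ0 : 0 ≤ q ^ 2 := sq_nonneg q
  have hQ1 : q ^ 2 < 1 := pow_lt_one₀ hq.le hq1 two_ne_zero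
  have ha1 := rpow_two_mul_add_two_lt_one hq hq1 hν
  have ha0 : 0 < q ^ (2 * ν + 2) := Real.rpow_pos_of_pos hq _
  refine summable_of_norm_succ_le_of_tendsto_zero
    (r := fun n => (q ^ 2) ^ (n + 1) * (x ^ 2 / ((1 - q ^ 2) * (1 - q ^ (2 * ν + 2))))) ?_ ?_
  · simpa using ((tendsto_pow_atTop_nhds_zero_of_lt_one hQ0 hQ1).comp
      (tendsto_add_atTop_nat 1)).mul_const (x ^ 2 / ((1 - q ^ 2) * (1 - q ^ (2 * ν + 2))))
  intro n
  have hQn : (q ^ 2) ^ (n + 1) ≤ q ^ 2 := pow_le_of_le_one hQ0 hQ1.le n.succ_ne_zero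
  have haQn : q ^ (2 * ν + 2) * (q ^ 2) ^ n ≤ q ^ (2 * ν + 2) :=
    mul_le_of_le_one_right ha0.le (pow_le_one₀ hQ0 hQ1.le)
  rw [norm_mul, norm_mul, J3coeff_succ_eq_mul hq hq1 hν, rpow_two_mul_natCast_succ_add hx,
    norm_mul, norm_mul, norm_neg, norm_div, norm_mul, Real.norm_of_nonneg (by positivity),
    Real.norm_of_nonneg (by linarith), Real.norm_of_nonneg (by linarith),
    Real.norm_of_nonneg (sq_nonneg x)]
  calc _ = (q ^ 2) ^ (n + 1) * (x ^ 2 / ((1 - (q ^ 2) ^ (n + 1)) *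
        (1 - q ^ (2 * ν + 2) * (q ^ 2) ^ n))) * (‖J3coeff q ν n‖ * ‖x ^ (2 * (n : ℝ) + ν)‖) := by
        ring
    _ ≤ _ := by
      gcongr
      nlinarith

theorem mul_J3_eq_sub (hq : 0 < q) (hq1 : q < 1) (hν : -1 < ν) {x : ℝ} (hx : 0 < x) :
    x * J3 q ν x = J3 q (ν + 1) x - q ^ (ν + 1) * J3 q (ν + 1) (q * x) := by
  have hν1 : -1 < ν + 1 := by linarith
  rw [J3_eq_tsum hq, J3_eq_tsum hq, J3_eq_tsum hq, ← tsum_mul_left, ← tsum_mul_left,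
    ← (summable_J3coeff_mul_rpow hq hq1 hν1 hx).tsum_sub
      ((summable_J3coeff_mul_rpow hq hq1 hν1 (mul_pos hq hx)).mul_left _)]
  refine tsum_congr fun n => ?_
  have hxpow : x * x ^ (2 * (n : ℝ) + ν) = x ^ (2 * (n : ℝ) + (ν + 1)) := by
    rw [← add_assoc, Real.rpow_add_one hx.ne', mul_comm]
  have hqpow : q ^ (ν + 1) * q ^ (2 * (n : ℝ) + (ν + 1)) = q ^ (2 * ν + 2) * (q ^ 2) ^ n := by
    rw [← Real.rpow_add hq, ← Real.rpow_natCast, ← Real.rpow_natCast, ← Real.rpow_mul hq.le,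
      ← Real.rpow_add hq]
    ring_nf
  rw [J3coeff_eq_mul_J3coeff_add_one hq hq1 hν n, Real.mul_rpow hq.le hx.le, ← hqpow]
  linear_combination (1 - q ^ (ν + 1) * q ^ (2 * (n : ℝ) + (ν + 1))) * J3coeff q (ν + 1) n * hxpow

theorem rpow_mul_J3_div_eq_sub (hq : 0 < q) (hq1 : q < 1) (hν : -1 < ν) {x : ℝ} (hx : 0 < x) :
    q ^ ν * J3 q ν (x / q) = J3 q ν x - x * J3 q (ν + 1) x := by
  have hν1 : -1 < ν + 1 := by linarith
  have hterm (n : ℕ) : q ^ ν * (J3coeff q ν n * (x / q) ^ (2 * (n : ℝ) + ν)) =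
      J3coeff q ν n * x ^ (2 * (n : ℝ) + ν) + J3coeff q ν n * x ^ (2 * (n : ℝ) + ν) *
        (((q ^ 2) ^ n)⁻¹ - 1) := by
    have hqpow : q ^ (2 * (n : ℝ) + ν) = (q ^ 2) ^ n * q ^ ν := by
      rw [Real.rpow_add hq, Real.rpow_mul hq.le, Real.rpow_two, Real.rpow_natCast]
    rw [Real.div_rpow hx.le hq.le, hqpow]
    field_simp
    ring
  have hshift : HasSum (fun n : ℕ => J3coeff q ν n * x ^ (2 * (n : ℝ) + ν) *
      (((q ^ 2) ^ n)⁻¹ - 1)) (-(x * J3 q (ν + 1) x)) := by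
    -- the `n = 0` term vanishes, and `J3coeff_succ` identifies the shifted series termwise
    refine (hasSum_nat_add_iff' 1).mp ?_
    simp only [range_one, sum_singleton, pow_zero, inv_one, sub_self, mul_zero, sub_zero]
    rw [J3_eq_tsum hq, ← tsum_mul_left, ← tsum_neg]
    convert ((summable_J3coeff_mul_rpow hq hq1 hν1 hx).mul_left x).neg.hasSum using 1
    funext n
    have hsucc := J3coeff_succ hq hq1 hν n
    rw [rpow_two_mul_natCast_succ_add hx, ← add_assoc, Real.rpow_add_one hx.ne']
    field_simp
    linear_combination hsucc
  rw [J3_eq_tsum hq, J3_eq_tsum hq, ← tsum_mul_left, sub_eq_add_neg,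
    ← ((summable_J3coeff_mul_rpow hq hq1 hν hx).hasSum.add hshift).tsum_eq]
  exact tsum_congr hterm

end J3Series

/-- Indefinite q-integral of a product of two third Jackson q-Bessel functions. -/
theorem qIntegral_J3_product (q μ ν : ℝ) (hq : 0 < q) (hq1 : q < 1)
    (hμ : -1 < μ) (hν : -1 < ν) :
    ∀ x : ℝ, 0 < x →
      qDeriv q
        (fun t => (qBracket q μ - qBracket q ν) * J3 q ν (t / q) * J3 q μ (t / q)
          + t / (1 - q) *
            (J3 q (ν + 1) t * J3 q μ (t / q) - J3 q ν (t / q) * J3 q (μ + 1) t)) x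
      = x * (q ^ (-ν) * qBracket q (ν - μ) / (1 - q)
            + (q ^ (-μ) * (qBracket q μ) ^ 2 - q ^ (-ν) * (qBracket q ν) ^ 2) / x ^ 2)
          * J3 q ν x * J3 q μ x := by
  intro x hx
  have hdiv {κ : ℝ} (hκ : -1 < κ) :
      J3 q κ (x / q) = (J3 q κ x - x * J3 q (κ + 1) x) / q ^ κ := by
    rw [← rpow_mul_J3_div_eq_sub hq hq1 hκ hx,
      mul_div_cancel_left₀ _ (Real.rpow_pos_of_pos hq κ).ne']
  have hmul {κ : ℝ} (hκ : -1 < κ) :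
      J3 q (κ + 1) (q * x) = (J3 q (κ + 1) x - x * J3 q κ x) / (q ^ κ * q) := by
    have hqκ := (Real.rpow_pos_of_pos hq κ).ne'
    rw [mul_J3_eq_sub hq hq1 hκ hx, Real.rpow_add_one hq.ne']
    field_simp
    ring
  have h1q : 1 - q ≠ 0 := (sub_pos.2 hq1).ne'
  have hqν := (Real.rpow_pos_of_pos hq ν).ne'
  have hqμ := (Real.rpow_pos_of_pos hq μ).ne'
  simp only [qDeriv, qBracket, mul_div_cancel_left₀ x hq.ne']
  rw [hdiv hν, hdiv hμ, hmul hν, hmul hμ, Real.rpow_neg hq.le, Real.rpow_neg hq.le,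
    Real.rpow_sub hq]
  field_simp
  ring
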